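/- arXiv:1703.04642 — 5 statements merged into one kernel-verified Lean document; each statement's English description precedes it below -/
import Mathlib

section
/- (Influence function of the saddlepoint, ż₀.) Let t > 0, x ∈ ℝ, and set z₀ = (t − 1)/(2t). Suppose z : ℝ → ℝ is a function with z(0) = z₀, z is differentiable at 0, and there is a neighborhood of 0 such that for all ε in it one has z(ε) < 1/2 and ∫_ℝ e^{z(ε) y²} ( y² − t ) d[(1−ε)·Φ_{0,1} + ε·δ_x](y) = 0 (the contaminated saddlepoint equation). Then z′(0) = (1/2)·t^{−5/2}·e^{ (t−1) x² / (2t) }·( t − x² ). -/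
/-!
Under `N(0,1)`, the weight `exp (w y²)` with `w < 1/2` amounts to the rescaling `y = s u`,
`s = (1 - 2w)^(-1/2)`. Hence the saddlepoint function is
`G(w) = (1 - 2w)^(-3/2) (1 - t (1 - 2w))`, which vanishes at `z₀` with `G'(z₀) = 2 t^(5/2)`.
Differentiating the contaminated equation `(1 - ε) G(z ε) + ε K ε = 0`, where
`K ε = exp (z ε x²) (x² - t)`, at `ε = 0` gives `G'(z₀) ż₀ + K 0 = 0`.
-/

open MeasureTheory ProbabilityTheory Real Filter Topology

lemma gaussianPDFReal_mul_mul_exp_mul_sq {w s : ℝ} (hws : s ^ 2 * (1 - 2 * w) = 1) (u : ℝ) :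
    gaussianPDFReal 0 1 (s * u) * rexp (w * (s * u) ^ 2) = gaussianPDFReal 0 1 u := by
  simp only [gaussianPDFReal, NNReal.coe_one, mul_one, sub_zero, mul_assoc, ← Real.exp_add]
  congr 2
  linear_combination (-u ^ 2 / 2) * hws

lemma integral_exp_mul_sq_smul_gaussianReal {E : Type*} [NormedAddCommGroup E] [NormedSpace ℝ E]
    {w s : ℝ} (hs : 0 < s) (hws : s ^ 2 * (1 - 2 * w) = 1) (f : ℝ → E) :
    ∫ y, rexp (w * y ^ 2) • f y ∂gaussianReal 0 1 = s • ∫ u, f (s * u) ∂gaussianReal 0 1 := by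
  set g : ℝ → E := fun y ↦ (gaussianPDFReal 0 1 y * rexp (w * y ^ 2)) • f y
  have hg : ∫ u, g (s * u) = s⁻¹ • ∫ y, g y := by
    rw [Measure.integral_comp_mul_left, abs_of_pos (inv_pos.2 hs)]
  simp only [integral_gaussianReal_eq_integral_smul one_ne_zero, smul_smul]
  rw [← inv_smul_eq_iff₀ hs.ne', ← hg]
  simp only [g, gaussianPDFReal_mul_mul_exp_mul_sq hws]

lemma integral_sq_gaussianReal_zero (v : NNReal) : ∫ y, y ^ 2 ∂gaussianReal 0 v = v := by
  have := variance_fun_id_gaussianReal (μ := 0) (v := v)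
  rw [variance_eq_integral measurable_id'.aemeasurable] at this
  simpa using this

lemma integral_exp_mul_sq_mul_sq_sub_gaussianReal (t : ℝ) {w : ℝ} (hw : w < 1 / 2) :
    ∫ y, rexp (w * y ^ 2) * (y ^ 2 - t) ∂gaussianReal 0 1
      = (1 - 2 * w) ^ (-(3 : ℝ) / 2) * (1 - t * (1 - 2 * w)) := by
  have hu : 0 < 1 - 2 * w := by linarith
  set s := (1 - 2 * w) ^ (-(1 : ℝ) / 2)
  have hs_pow (n : ℕ) : s ^ n = (1 - 2 * w) ^ (-(n : ℝ) / 2) := by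
    rw [← rpow_natCast, ← rpow_mul hu.le]
    ring_nf
  have hws : s ^ 2 * (1 - 2 * w) = 1 := by
    rw [hs_pow, ← rpow_add_one hu.ne']
    norm_num
  have hint : Integrable (fun u : ℝ ↦ s ^ 2 * u ^ 2) (gaussianReal 0 1) :=
    (memLp_id_gaussianReal 2).integrable_sq.const_mul _
  calc ∫ y, rexp (w * y ^ 2) * (y ^ 2 - t) ∂gaussianReal 0 1
      = s * ∫ u, ((s * u) ^ 2 - t) ∂gaussianReal 0 1 :=
        integral_exp_mul_sq_smul_gaussianReal (by positivity) hws (fun y ↦ y ^ 2 - t)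
    _ = s * (s ^ 2 - t) := by
        simp_rw [mul_pow]
        rw [integral_sub hint (integrable_const t), integral_const_mul,
          integral_sq_gaussianReal_zero, integral_const, probReal_univ, one_smul, NNReal.coe_one,
          mul_one]
    _ = s ^ 3 * (1 - t * (1 - 2 * w)) := by linear_combination (t * s) * hws
    _ = _ := by rw [hs_pow]; norm_num

lemma hasDerivAt_rpow_mul_one_sub (t : ℝ) {w : ℝ} (hw : w < 1 / 2) :
    HasDerivAt (fun w ↦ (1 - 2 * w) ^ (-(3 : ℝ) / 2) * (1 - t * (1 - 2 * w)))
      ((1 - 2 * w) ^ (-(5 : ℝ) / 2) * (3 - t * (1 - 2 * w))) w := by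
  have hu : 0 < 1 - 2 * w := by linarith
  have hlin : HasDerivAt (fun w : ℝ ↦ 1 - 2 * w) (-2) w := by
    simpa using ((hasDerivAt_id w).const_mul 2).const_sub 1
  have hpow := hlin.rpow_const (p := -(3 : ℝ) / 2) (Or.inl hu.ne')
  refine (hpow.mul ((hlin.const_mul t).const_sub 1)).congr_deriv ?_
  rw [show -(3 : ℝ) / 2 = -(5 : ℝ) / 2 + 1 by norm_num, rpow_add_one hu.ne']
  norm_num
  ring

lemma deriv_mul_add_eq_zero_of_contaminated_eq_zero {G K z : ℝ → ℝ} {G' : ℝ}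
    (hG : HasDerivAt G G' (z 0)) (hG0 : G (z 0) = 0) (hz : DifferentiableAt ℝ z 0)
    (hK : DifferentiableAt ℝ K 0) (h : ∀ᶠ ε in 𝓝 0, (1 - ε) * G (z ε) + ε * K ε = 0) :
    G' * deriv z 0 + K 0 = 0 := by
  have hlin : HasDerivAt (fun ε : ℝ ↦ 1 - ε) (-1) 0 := (hasDerivAt_id 0).const_sub 1
  have hH := (hlin.mul (hG.comp 0 hz.hasDerivAt)).add ((hasDerivAt_id 0).mul hK.hasDerivAt)
  have hH0 := (hasDerivAt_const (0 : ℝ) (0 : ℝ)).congr_of_eventuallyEq h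
  simpa [hG0] using hH.unique hH0

theorem stmt12 (t x : ℝ) (ht : 0 < t) (z : ℝ → ℝ)
    (hz0 : z 0 = (t - 1) / (2 * t))
    (hdiff : DifferentiableAt ℝ z 0)
    (heq : ∀ᶠ ε in nhds (0 : ℝ), z ε < 1 / 2 ∧
      (1 - ε) * (∫ y, Real.exp (z ε * y ^ 2) * (y ^ 2 - t) ∂(gaussianReal 0 1))
        + ε * (Real.exp (z ε * x ^ 2) * (x ^ 2 - t)) = 0) :
    deriv z 0
      = (1 / 2) * t ^ (-(5 : ℝ) / 2) * Real.exp ((t - 1) * x ^ 2 / (2 * t))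
        * (t - x ^ 2) := by
  have hu : 1 - 2 * z 0 = t⁻¹ := by rw [hz0]; field_simp; ring
  have hz0_lt : z 0 < 1 / 2 := by linarith [inv_pos.2 ht]
  have hderiv := deriv_mul_add_eq_zero_of_contaminated_eq_zero
    (hasDerivAt_rpow_mul_one_sub t hz0_lt) (by rw [hu, mul_inv_cancel₀ ht.ne', sub_self, mul_zero])
    hdiff (K := fun ε ↦ rexp (z ε * x ^ 2) * (x ^ 2 - t)) (by fun_prop) <| by
      filter_upwards [heq] with ε ⟨hε, hsaddle⟩
      rwa [integral_exp_mul_sq_mul_sq_sub_gaussianReal t hε] at hsaddle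
  rw [hu, inv_rpow ht.le, mul_inv_cancel₀ ht.ne', hz0] at hderiv
  have hpow : 0 < t ^ (-(5 : ℝ) / 2) := by positivity
  field_simp at hderiv ⊢
  linear_combination hderiv
end

section
/- (Influence function of the cumulant generating functional at the saddlepoint, K̇(z₀).) Let t > 0, x ∈ ℝ, and set z₀ = (t − 1)/(2t). Suppose z : ℝ → ℝ satisfies z(0) = z₀, z is differentiable at 0 with z′(0) = (1/2)·t^{−5/2}·e^{ (t−1) x² / (2t) }·( t − x² ), and z(ε) < 1/2 on a neighborhood of 0. Then the function ε ↦ log ∫_ℝ e^{z(ε) y²} d[(1−ε)·Φ_{0,1} + ε·δ_x](y) is differentiable at 0 with derivative (3/2)·t^{−1/2}·e^{z₀ x²} − (1/2)·t^{−3/2}·x²·e^{z₀ x²} − 1. -/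
open MeasureTheory ProbabilityTheory Real
open scoped NNReal

/-! Under `N(0, 1)`, `E[exp (c y²)] = (1 - 2c)^(-1/2)` for `c < 1/2`, so near `0` the functional is
`log ((1 - ε) A ε + ε B ε)` with `A ε = (1 - 2 z ε)^(-1/2)` and `B ε = exp (z ε x²)`. Differentiating a
contaminated mixture at `ε = 0` gives `(A' 0 - A 0 + B 0) / A 0`, and with `1 - 2 z 0 = 1/t` the result
reduces to an algebraic identity in `t^(-1/2)` and `t`. -/

theorem integral_exp_mul_sq_gaussianReal {v : ℝ≥0} (hv : v ≠ 0) {c : ℝ} (hc : c * v < 1 / 2) :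
    ∫ y, exp (c * y ^ 2) ∂(gaussianReal 0 v) = (1 - 2 * c * v) ^ (-(1 : ℝ) / 2) := by
  have hv0 : (0 : ℝ) < v := by positivity
  have hb : 0 < 1 / (2 * v) - c := by
    rw [sub_pos, lt_div_iff₀ (by positivity)]; linarith
  have hdensity (y : ℝ) : gaussianPDFReal 0 v y • exp (c * y ^ 2)
      = (√(2 * π * v))⁻¹ * exp (-(1 / (2 * v) - c) * y ^ 2) := by
    rw [gaussianPDFReal, smul_eq_mul, mul_assoc, ← exp_add]
    congr 2
    field_simp
    ring
  simp only [integral_gaussianReal_eq_integral_smul hv, hdensity, integral_const_mul,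
    integral_gaussian]
  rw [show -(1 : ℝ) / 2 = -(1 / 2) by ring, rpow_neg (by linarith), ← sqrt_eq_rpow,
    ← sqrt_inv, ← sqrt_inv, ← sqrt_mul (by positivity)]
  congr 1
  field_simp

theorem hasDerivAt_mul_of_continuousAt {B : ℝ → ℝ} (hB : ContinuousAt B 0) :
    HasDerivAt (fun ε => ε * B ε) (B 0) 0 := by
  rw [hasDerivAt_iff_tendsto_slope_zero]
  refine (hB.tendsto.mono_left nhdsWithin_le_nhds).congr' ?_
  filter_upwards [self_mem_nhdsWithin] with ε (hε : ε ≠ 0)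
  simp [hε]

theorem hasDerivAt_log_contamination {A B : ℝ → ℝ} {A' : ℝ} (hA : HasDerivAt A A' 0)
    (hB : ContinuousAt B 0) (hA0 : A 0 ≠ 0) :
    HasDerivAt (fun ε => log ((1 - ε) * A ε + ε * B ε)) ((A' - A 0 + B 0) / A 0) 0 := by
  have hmix := (((hasDerivAt_id 0).const_sub 1).mul hA).add (hasDerivAt_mul_of_continuousAt hB)
  convert hmix.log (by simpa using hA0) using 1 <;> simp
  ring

theorem stmt13 (t x : ℝ) (ht : 0 < t) (z : ℝ → ℝ)
    (hz0 : z 0 = (t - 1) / (2 * t))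
    (hz' : HasDerivAt z
      ((1 / 2) * t ^ (-(5 : ℝ) / 2) * Real.exp ((t - 1) * x ^ 2 / (2 * t))
        * (t - x ^ 2)) 0)
    (hlt : ∀ᶠ ε in nhds (0 : ℝ), z ε < 1 / 2) :
    HasDerivAt
      (fun ε : ℝ => Real.log
        ((1 - ε) * (∫ y, Real.exp (z ε * y ^ 2) ∂(gaussianReal 0 1))
          + ε * Real.exp (z ε * x ^ 2)))
      ((3 / 2) * t ^ (-(1 : ℝ) / 2) * Real.exp (((t - 1) / (2 * t)) * x ^ 2)
        - (1 / 2) * t ^ (-(3 : ℝ) / 2) * x ^ 2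
            * Real.exp (((t - 1) / (2 * t)) * x ^ 2)
        - 1) 0 := by
  have h1t : 1 - 2 * z 0 = t⁻¹ := by rw [hz0]; field_simp; ring
  have hmgf : ∀ᶠ ε in nhds 0, ∫ y, exp (z ε * y ^ 2) ∂(gaussianReal 0 1)
      = (1 - 2 * z ε) ^ (-(1 : ℝ) / 2) := by
    filter_upwards [hlt] with ε hε
    simpa using integral_exp_mul_sq_gaussianReal one_ne_zero (c := z ε) (by simpa using hε)
  have hA := ((hz'.const_mul 2).const_sub 1).rpow_const (p := -(1 : ℝ) / 2)
    (Or.inl (by rw [h1t]; positivity))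
  have hB : ContinuousAt (fun ε => exp (z ε * x ^ 2)) 0 := by
    have := hz'.continuousAt
    fun_prop
  have hlog := hasDerivAt_log_contamination hA hB (by rw [h1t]; positivity)
  refine (hlog.congr_of_eventuallyEq ?_).congr_deriv ?_
  · filter_upwards [hmgf] with ε h
    rw [h]
  · have hu : t ^ (-1 / 2 : ℝ) ≠ 0 := (rpow_pos_of_pos ht _).ne'
    have h3 : t ^ (-3 / 2 : ℝ) = t ^ (-1 / 2 : ℝ) / t := by
      rw [← rpow_sub_one ht.ne']; norm_num
    have h5 : t ^ (-5 / 2 : ℝ) = t ^ (-1 / 2 : ℝ) / t / t := by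
      rw [← rpow_sub_one ht.ne', ← rpow_sub_one ht.ne']; norm_num
    rw [h1t, hz0, inv_rpow ht.le, inv_rpow ht.le, rpow_sub_one ht.ne', h3, h5]
    field_simp
    ring
end

section
/- (Orthogonal Procrustes trace maximization.) Let k ≥ 1 and let A be a real k×k matrix admitting a singular-value decomposition A = U D Vᵀ, where U and V are k×k orthogonal matrices and D is a diagonal k×k matrix with nonnegative diagonal entries. Then for every k×k orthogonal matrix Γ one has trace(A Γ) ≤ trace(D), and the bound is attained at Γ = V Uᵀ, i.e. trace(A (V Uᵀ)) = trace(D). -/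
open Matrix

theorem stmt16 (k : ℕ) (hk : 1 ≤ k) (A U D V : Matrix (Fin k) (Fin k) ℝ)
    (hU : Uᵀ * U = 1) (hV : Vᵀ * V = 1)
    (hD : D.IsDiag) (hDnn : ∀ i, 0 ≤ D i i)
    (hA : A = U * D * Vᵀ) :
    (∀ Γ : Matrix (Fin k) (Fin k) ℝ, Γᵀ * Γ = 1 → (A * Γ).trace ≤ D.trace)
    ∧ (A * (V * Uᵀ)).trace = D.trace := by
  have hV' : V * Vᵀ = 1 := mul_eq_one_comm.mp hV

  constructor
  · intro Γ hΓ
    set M := Vᵀ * Γ * U with hM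
    have hΓ' : Γ * Γᵀ = 1 := mul_eq_one_comm.mp hΓ
    have hMo : Mᵀ * M = 1 := by
      simp only [hM, Matrix.transpose_mul]
      calc Uᵀ * (Γᵀ * Vᵀᵀ) * (Vᵀ * Γ * U)
          = Uᵀ * (Γᵀ * ((V * Vᵀ) * (Γ * U))) := by
            simp [Matrix.mul_assoc]
        _ = Uᵀ * ((Γᵀ * Γ) * U) := by rw [hV']; simp [Matrix.mul_assoc]
        _ = 1 := by rw [hΓ, one_mul, hU]
    have hdiag : ∀ i, M i i ≤ 1 := by
      intro i
      have h1 : (Mᵀ * M) i i = 1 := by rw [hMo]; simp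
      have h2 : (M i i)^2 ≤ ∑ j, (M j i)^2 := by
        exact Finset.single_le_sum (f := fun j => (M j i)^2)
          (fun j _ => sq_nonneg _) (Finset.mem_univ i)
      have h3 : ∑ j, (M j i)^2 = 1 := by
        rw [← h1]; simp [Matrix.mul_apply, sq]
      nlinarith [h2, h3]
    have htr : (A * Γ).trace = (D * M).trace := by
      rw [hA, hM]
      calc (U * D * Vᵀ * Γ).trace = (U * (D * Vᵀ * Γ)).trace := by
            simp [Matrix.mul_assoc]
        _ = ((D * Vᵀ * Γ) * U).trace := Matrix.trace_mul_comm _ _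
        _ = (D * (Vᵀ * Γ * U)).trace := by simp [Matrix.mul_assoc]
    rw [htr]
    have hDM : (D * M).trace = ∑ i, D i i * M i i := by
      simp only [Matrix.trace, Matrix.diag, Matrix.mul_apply]
      apply Finset.sum_congr rfl
      intro i _
      rw [Finset.sum_eq_single i]
      · intro j _ hj; rw [hD (Ne.symm hj), zero_mul]
      · intro h; exact absurd (Finset.mem_univ i) h
    rw [hDM, Matrix.trace]
    apply Finset.sum_le_sum
    intro i _
    calc D i i * M i i ≤ D i i * 1 := by
          exact mul_le_mul_of_nonneg_left (hdiag i) (hDnn i)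
      _ = D.diag i := by simp [Matrix.diag]
  · rw [hA]
    calc (U * D * Vᵀ * (V * Uᵀ)).trace
        = (U * D * ((Vᵀ * V) * Uᵀ)).trace := by simp [Matrix.mul_assoc]
      _ = (U * D * Uᵀ).trace := by rw [hV]; simp [Matrix.mul_assoc]
      _ = ((D * Uᵀ) * U).trace := by rw [Matrix.mul_assoc]; exact Matrix.trace_mul_comm _ _
      _ = D.trace := by rw [Matrix.mul_assoc, hU, Matrix.mul_one]
end

section
/- (Partial Procrustes superimposition: minimal residual distance.) Let p, k ≥ 1 and let X₁, X₂ be real p×k matrices. Suppose X₂ᵀ X₁ = U D Vᵀ where U and V are k×k orthogonal matrices and D is a diagonal k×k matrix with nonnegative diagonal entries. Then the value trace(X₂ᵀX₂) + trace(X₁ᵀX₁) − 2·trace(D) is the minimum over all k×k orthogonal matrices Γ of the residual trace((X₂ − X₁Γ)ᵀ (X₂ − X₁Γ)), and this minimum is attained at Γ = V Uᵀ. -/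
open Matrix

lemma orth_entry_le_one {k : ℕ} (A : Matrix (Fin k) (Fin k) ℝ)
    (hA : Aᵀ * A = 1) (i : Fin k) : A i i ≤ 1 := by
  have h : (Aᵀ * A) i i = 1 := by rw [hA]; simp [Matrix.one_apply]
  have h2 : ∑ j, A j i ^ 2 = 1 := by
    simpa [Matrix.mul_apply, Matrix.transpose_apply, sq] using h
  have hle : A i i ^ 2 ≤ 1 := by
    rw [← h2]
    exact Finset.single_le_sum (f := fun j => A j i ^ 2)
      (fun j _ => sq_nonneg _) (Finset.mem_univ i)
  nlinarith [sq_nonneg (A i i - 1)]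

lemma key_ineq {k : ℕ} (D A : Matrix (Fin k) (Fin k) ℝ)
    (hD : D.IsDiag) (hDnn : ∀ i, 0 ≤ D i i) (hA : Aᵀ * A = 1) :
    (D * A).trace ≤ D.trace := by
  rw [Matrix.trace, Matrix.trace]
  apply Finset.sum_le_sum
  intro i _
  have hDA : (D * A) i i = D i i * A i i := by
    rw [Matrix.mul_apply]
    rw [Finset.sum_eq_single i]
    · intro b _ hb; rw [hD hb.symm, zero_mul]
    · simp
  rw [Matrix.diag_apply, Matrix.diag_apply, hDA]
  calc D i i * A i i ≤ D i i * 1 :=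
        mul_le_mul_of_nonneg_left (orth_entry_le_one A hA i) (hDnn i)
    _ = D i i := mul_one _

theorem stmt17 (p k : ℕ) (hp : 1 ≤ p) (hk : 1 ≤ k)
    (X₁ X₂ : Matrix (Fin p) (Fin k) ℝ) (U D V : Matrix (Fin k) (Fin k) ℝ)
    (hU : Uᵀ * U = 1) (hV : Vᵀ * V = 1)
    (hD : D.IsDiag) (hDnn : ∀ i, 0 ≤ D i i)
    (hSVD : X₂ᵀ * X₁ = U * D * Vᵀ) :
    IsLeast {r : ℝ | ∃ Γ : Matrix (Fin k) (Fin k) ℝ, Γᵀ * Γ = 1 ∧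
        r = ((X₂ - X₁ * Γ)ᵀ * (X₂ - X₁ * Γ)).trace}
      ((X₂ᵀ * X₂).trace + (X₁ᵀ * X₁).trace - 2 * D.trace)
    ∧ ((X₂ - X₁ * (V * Uᵀ))ᵀ * (X₂ - X₁ * (V * Uᵀ))).trace
        = (X₂ᵀ * X₂).trace + (X₁ᵀ * X₁).trace - 2 * D.trace := by
  have hUU : U * Uᵀ = 1 := mul_eq_one_comm.mp hU
  have hVV : V * Vᵀ = 1 := mul_eq_one_comm.mp hV
  -- Γ₀ = V Uᵀ is orthogonal
  have hΓ₀ : (V * Uᵀ)ᵀ * (V * Uᵀ) = 1 := by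
    rw [Matrix.transpose_mul, Matrix.transpose_transpose]
    calc U * Vᵀ * (V * Uᵀ) = U * (Vᵀ * V * Uᵀ) := by
          simp only [Matrix.mul_assoc]
      _ = 1 := by rw [hV, one_mul, hUU]
  -- expansion of the residual trace
  have expand : ∀ Γ : Matrix (Fin k) (Fin k) ℝ, Γᵀ * Γ = 1 →
      ((X₂ - X₁ * Γ)ᵀ * (X₂ - X₁ * Γ)).trace
        = (X₂ᵀ * X₂).trace + (X₁ᵀ * X₁).trace - 2 * (X₂ᵀ * X₁ * Γ).trace := by
    intro Γ hΓ
    have hΓΓ : Γ * Γᵀ = 1 := mul_eq_one_comm.mp hΓ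
    have t1 : (Γᵀ * X₁ᵀ * (X₁ * Γ)).trace = (X₁ᵀ * X₁).trace := by
      rw [Matrix.trace_mul_comm]
      rw [show X₁ * Γ * (Γᵀ * X₁ᵀ) = X₁ * (Γ * Γᵀ) * X₁ᵀ by
        simp only [Matrix.mul_assoc]]
      rw [hΓΓ, Matrix.mul_one, ← Matrix.trace_mul_comm]
    have t2 : (Γᵀ * X₁ᵀ * X₂).trace = (X₂ᵀ * X₁ * Γ).trace := by
      rw [← Matrix.trace_transpose (Γᵀ * X₁ᵀ * X₂)]
      simp [Matrix.transpose_mul, Matrix.mul_assoc]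
    have t3 : (X₂ᵀ * (X₁ * Γ)).trace = (X₂ᵀ * X₁ * Γ).trace := by
      rw [Matrix.mul_assoc]
    rw [Matrix.transpose_sub, Matrix.transpose_mul, Matrix.sub_mul, Matrix.mul_sub,
      Matrix.mul_sub, Matrix.trace_sub, Matrix.trace_sub, Matrix.trace_sub, t1, t2, t3]
    ring
  -- trace of X₂ᵀX₁Γ as trace of D * W
  have hDW : ∀ Γ : Matrix (Fin k) (Fin k) ℝ,
      (X₂ᵀ * X₁ * Γ).trace = (D * (Vᵀ * Γ * U)).trace := by
    intro Γ
    rw [hSVD, show U * D * Vᵀ * Γ = U * (D * (Vᵀ * Γ)) by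
      simp only [Matrix.mul_assoc], Matrix.trace_mul_comm,
      show D * (Vᵀ * Γ) * U = D * (Vᵀ * Γ * U) by simp only [Matrix.mul_assoc]]
  -- value at Γ₀
  have hval : ((X₂ - X₁ * (V * Uᵀ))ᵀ * (X₂ - X₁ * (V * Uᵀ))).trace
      = (X₂ᵀ * X₂).trace + (X₁ᵀ * X₁).trace - 2 * D.trace := by
    rw [expand (V * Uᵀ) hΓ₀, hDW]
    have : Vᵀ * (V * Uᵀ) * U = 1 := by
      calc Vᵀ * (V * Uᵀ) * U = Vᵀ * (V * (Uᵀ * U)) := by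
            simp only [Matrix.mul_assoc]
        _ = 1 := by rw [hU, Matrix.mul_one, hV]
    rw [this, Matrix.mul_one]
  refine ⟨⟨⟨V * Uᵀ, hΓ₀, hval.symm⟩, ?_⟩, hval⟩
  rintro r ⟨Γ, hΓ, rfl⟩
  rw [expand Γ hΓ, hDW Γ]
  have hW : (Vᵀ * Γ * U)ᵀ * (Vᵀ * Γ * U) = 1 := by
    calc (Vᵀ * Γ * U)ᵀ * (Vᵀ * Γ * U)
        = Uᵀ * (Γᵀ * (V * Vᵀ * (Γ * U))) := by
          simp only [Matrix.transpose_mul, Matrix.transpose_transpose,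
            Matrix.mul_assoc]
      _ = Uᵀ * (Γᵀ * Γ * U) := by rw [hVV, one_mul, Matrix.mul_assoc]
      _ = 1 := by rw [hΓ, one_mul, hU]
  have := key_ineq D (Vᵀ * Γ * U) hD hDnn hW
  linarith
end

section
/- (Full Procrustes distance formula.) Let p, k ≥ 1 and let X₁, X₂ be real p×k matrices that are scaled to unit centroid size, i.e. trace(X₁ᵀX₁) = 1 and trace(X₂ᵀX₂) = 1. Suppose X₂ᵀ X₁ = U D Vᵀ where U and V are k×k orthogonal matrices and D is a diagonal k×k matrix with nonnegative diagonal entries λ₁,…,λ_k. Then 1 − (Σ_{j=1}^k λ_j)² is the minimum over all scalars β ∈ ℝ and all k×k orthogonal matrices Γ of trace((X₂ − β X₁Γ)ᵀ (X₂ − β X₁Γ)), and the minimum is attained at β = Σ_{j=1}^k λ_j and Γ = V Uᵀ; hence the full Procrustes distance satisfies d_F(X₁,X₂) = √(1 − (Σ_{j=1}^k λ_j)²). -/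
/-!
Expanding the residual gives `1 - 2 β tr(X₂ᵀ X₁ Γ) + β²`, so for fixed `Γ` the best scale is
`β = tr(X₂ᵀ X₁ Γ)` with value `1 - tr(X₂ᵀ X₁ Γ)²`. Through the singular value decomposition,
`tr(X₂ᵀ X₁ Γ) = tr(D M)` with `M = Vᵀ Γ U` orthogonal; as the entries of an orthogonal matrix lie
in `[-1, 1]`, this is at most `Σ λⱼ` in absolute value, with equality at `M = 1`, i.e. `Γ = V Uᵀ`.
-/

open Matrix

section TraceIdentities

variable {m n R : Type*} [Fintype m] [Fintype n] [CommRing R]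

theorem trace_transpose_mul_self_sub_smul (A B : Matrix m n R) (β : R) :
    ((A - β • B)ᵀ * (A - β • B)).trace
      = (Aᵀ * A).trace - 2 * β * (Aᵀ * B).trace + β ^ 2 * (Bᵀ * B).trace := by
  have hsymm : (Bᵀ * A).trace = (Aᵀ * B).trace := by
    rw [← trace_transpose, transpose_mul, transpose_transpose]
  simp only [transpose_sub, transpose_smul, Matrix.sub_mul, Matrix.mul_sub, Matrix.smul_mul,
    Matrix.mul_smul, trace_sub, trace_smul, hsymm, smul_eq_mul]
  ring

theorem trace_transpose_mul_self_mul_orthogonal [DecidableEq n] (X : Matrix m n R)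
    {Γ : Matrix n n R} (hΓ : Γ ∈ orthogonalGroup n R) :
    ((X * Γ)ᵀ * (X * Γ)).trace = (Xᵀ * X).trace := by
  rw [transpose_mul, Matrix.mul_assoc, trace_mul_comm, Matrix.mul_assoc, Matrix.mul_assoc,
    (mem_orthogonalGroup_iff n R).mp hΓ, Matrix.mul_one]

end TraceIdentities

section OrthogonalTraceBound

variable {n : Type*} [Fintype n] [DecidableEq n]

theorem abs_trace_mul_orthogonal_le_trace {D M : Matrix n n ℝ} (hD : D.IsDiag)
    (hDnn : ∀ i, 0 ≤ D i i) (hM : M ∈ orthogonalGroup n ℝ) :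
    |(D * M).trace| ≤ D.trace := by
  have htrace : (D * M).trace = ∑ i, D i i * M i i := by
    conv_lhs => rw [← hD.diagonal_diag]
    simp [trace, diagonal_mul]
  rw [htrace]
  refine (Finset.abs_sum_le_sum_abs _ _).trans (Finset.sum_le_sum fun i _ => ?_)
  rw [abs_mul, abs_of_nonneg (hDnn i)]
  exact mul_le_of_le_one_right (hDnn i) (entry_norm_bound_of_unitary hM i i)

variable {A U D V : Matrix n n ℝ}

theorem abs_trace_mul_orthogonal_le_of_svd (hA : A = U * D * Vᵀ)
    (hU : U ∈ orthogonalGroup n ℝ) (hV : V ∈ orthogonalGroup n ℝ) (hD : D.IsDiag)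
    (hDnn : ∀ i, 0 ≤ D i i) {Γ : Matrix n n ℝ} (hΓ : Γ ∈ orthogonalGroup n ℝ) :
    |(A * Γ).trace| ≤ D.trace := by
  have hM : Vᵀ * Γ * U ∈ orthogonalGroup n ℝ :=
    mul_mem (mul_mem (transpose_mem_unitaryGroup_iff.mpr hV) hΓ) hU
  have hcycle : (A * Γ).trace = (D * (Vᵀ * Γ * U)).trace := by
    rw [hA, Matrix.mul_assoc, Matrix.mul_assoc, trace_mul_comm]
    simp only [Matrix.mul_assoc]
  exact hcycle ▸ abs_trace_mul_orthogonal_le_trace hD hDnn hM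

theorem trace_mul_mul_transpose_of_svd (hA : A = U * D * Vᵀ)
    (hU : U ∈ orthogonalGroup n ℝ) (hV : V ∈ orthogonalGroup n ℝ) :
    (A * (V * Uᵀ)).trace = D.trace := by
  rw [hA, Matrix.mul_assoc, ← Matrix.mul_assoc Vᵀ, (mem_orthogonalGroup_iff' n ℝ).mp hV,
    Matrix.one_mul, Matrix.mul_assoc, trace_mul_comm, Matrix.mul_assoc,
    (mem_orthogonalGroup_iff' n ℝ).mp hU, Matrix.mul_one]

end OrthogonalTraceBound

theorem stmt18_general (p k : ℕ)
    (X₁ X₂ : Matrix (Fin p) (Fin k) ℝ) (U D V : Matrix (Fin k) (Fin k) ℝ)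
    (hU : Uᵀ * U = 1) (hV : Vᵀ * V = 1)
    (hD : D.IsDiag) (hDnn : ∀ i, 0 ≤ D i i)
    (hX₁ : (X₁ᵀ * X₁).trace = 1) (hX₂ : (X₂ᵀ * X₂).trace = 1)
    (hSVD : X₂ᵀ * X₁ = U * D * Vᵀ) :
    IsLeast {r : ℝ | ∃ (β : ℝ) (Γ : Matrix (Fin k) (Fin k) ℝ), Γᵀ * Γ = 1 ∧
        r = ((X₂ - β • (X₁ * Γ))ᵀ * (X₂ - β • (X₁ * Γ))).trace}
      (1 - (∑ j, D j j) ^ 2)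
    ∧ ((X₂ - (∑ j, D j j) • (X₁ * (V * Uᵀ)))ᵀ
          * (X₂ - (∑ j, D j j) • (X₁ * (V * Uᵀ)))).trace
        = 1 - (∑ j, D j j) ^ 2 := by
  have orthogonal {Γ : Matrix (Fin k) (Fin k) ℝ} : Γᵀ * Γ = 1 ↔ Γ ∈ orthogonalGroup (Fin k) ℝ :=
    (mem_orthogonalGroup_iff' _ _).symm
  have hU' := orthogonal.mp hU
  have hV' := orthogonal.mp hV
  have hΓ₀ : V * Uᵀ ∈ orthogonalGroup (Fin k) ℝ :=
    mul_mem hV' (transpose_mem_unitaryGroup_iff.mpr hU')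
  have residual (β : ℝ) {Γ} (hΓ : Γ ∈ orthogonalGroup (Fin k) ℝ) :
      ((X₂ - β • (X₁ * Γ))ᵀ * (X₂ - β • (X₁ * Γ))).trace
        = 1 - 2 * β * (X₂ᵀ * X₁ * Γ).trace + β ^ 2 := by
    rw [trace_transpose_mul_self_sub_smul, trace_transpose_mul_self_mul_orthogonal _ hΓ, hX₁,
      hX₂, Matrix.mul_assoc, mul_one]
  change IsLeast _ (1 - D.trace ^ 2) ∧ ((X₂ - D.trace • _)ᵀ * (X₂ - D.trace • _)).trace = _
  have attained : ((X₂ - D.trace • (X₁ * (V * Uᵀ)))ᵀ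
      * (X₂ - D.trace • (X₁ * (V * Uᵀ)))).trace = 1 - D.trace ^ 2 := by
    rw [residual _ hΓ₀, hSVD, trace_mul_mul_transpose_of_svd rfl hU' hV']
    ring
  refine ⟨⟨⟨_, _, orthogonal.mpr hΓ₀, attained.symm⟩, ?_⟩, attained⟩
  rintro r ⟨β, Γ, hΓ, rfl⟩
  have hbound := abs_le.mp
    (abs_trace_mul_orthogonal_le_of_svd hSVD hU' hV' hD hDnn (orthogonal.mp hΓ))
  rw [residual β (orthogonal.mp hΓ)]
  nlinarith [sq_nonneg (β - (X₂ᵀ * X₁ * Γ).trace)]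

theorem stmt18 (p k : ℕ) (hp : 1 ≤ p) (hk : 1 ≤ k)
    (X₁ X₂ : Matrix (Fin p) (Fin k) ℝ) (U D V : Matrix (Fin k) (Fin k) ℝ)
    (hU : Uᵀ * U = 1) (hV : Vᵀ * V = 1)
    (hD : D.IsDiag) (hDnn : ∀ i, 0 ≤ D i i)
    (hX₁ : (X₁ᵀ * X₁).trace = 1) (hX₂ : (X₂ᵀ * X₂).trace = 1)
    (hSVD : X₂ᵀ * X₁ = U * D * Vᵀ) :
    IsLeast {r : ℝ | ∃ (β : ℝ) (Γ : Matrix (Fin k) (Fin k) ℝ), Γᵀ * Γ = 1 ∧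
        r = ((X₂ - β • (X₁ * Γ))ᵀ * (X₂ - β • (X₁ * Γ))).trace}
      (1 - (∑ j, D j j) ^ 2)
    ∧ ((X₂ - (∑ j, D j j) • (X₁ * (V * Uᵀ)))ᵀ
          * (X₂ - (∑ j, D j j) • (X₁ * (V * Uᵀ)))).trace
        = 1 - (∑ j, D j j) ^ 2 :=
  stmt18_general p k X₁ X₂ U D V hU hV hD hDnn hX₁ hX₂ hSVD
end
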